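/- Let 0 < α < 1, λ ∈ ℝ, and c ≠ 0, and set y(t) = c · t^{α} E_{2α,α+1}(−λ t^{2α}). Then the boundary condition (I^{1−α}_{0+} y)(1) = 0 holds if and only if E_{2α,2}(−λ) = 0; moreover (I^{1−α}_{0+} y)(t) → 0 as t → 0⁺. In particular, λ is an eigenvalue of the Dirichlet-type problem −^cD^α_{0+} ∘ D^α_{0+} y = λ y on [0,1] with boundary conditions (I^{1−α}_{0+} y)|_{t=0} = 0 and (I^{1−α}_{0+} y)|_{t=1} = 0 among solutions of this form exactly when E_{2α,2}(−λ) = 0. -/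

import Mathlib

/-!
Expanding the Mittag–Leffler function into its power series, the fractional integral acts term by
term through the Beta integral: `I^β (s ^ a / Γ(a + 1)) = t ^ (a + β) / Γ(a + β + 1)`. Hence
`I^β (s ^ γ E_{δ,γ+1}(μ s ^ δ)) = t ^ (γ + β) E_{δ,γ+β+1}(μ t ^ δ)`, and for `γ = α`, `β = 1 - α`,
`δ = 2α` the fractional integral of `y` is `c t E_{2α,2}(-λ t ^ {2α})`. At `t = 1` this vanishes
iff `E_{2α,2}(-λ) = 0`, and it tends to `0` as `t → 0⁺` because the entire function `E_{2α,2}` is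
continuous. Termwise integration is justified by `Γ` growing faster than any exponential.
-/

open MeasureTheory intervalIntegral Real Filter Topology

/-- Two-parameter Mittag–Leffler function `E_{δ,θ}(z) = ∑ z^k / Γ(δk + θ)`. -/
noncomputable def mittagLeffler (δ θ z : ℝ) : ℝ :=
  ∑' k : ℕ, z ^ k / Real.Gamma (δ * k + θ)

/-- Left Riemann–Liouville fractional integral of order `α` based at `0`:
`(I^α_{0+} f)(t) = (1/Γ(α)) ∫_0^t f(s) (t−s)^{α−1} ds`. -/
noncomputable def RLintegralLeft0 (α : ℝ) (f : ℝ → ℝ) (t : ℝ) : ℝ :=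
  (1 / Real.Gamma α) * ∫ s in (0:ℝ)..t, f s * (t - s) ^ (α - 1)

lemma rpow_div_Gamma_add_one_le {b y : ℝ} (hb : 1 ≤ b) (hy : 1 ≤ y) :
    b ^ y / Gamma (y + 1) ≤ b * exp b := by
  set n := ⌊y⌋₊
  have hn : 1 ≤ n := Nat.le_floor (by exact_mod_cast hy)
  have hny : (n : ℝ) ≤ y := Nat.floor_le (by linarith)
  have hGamma : (n.factorial : ℝ) ≤ Gamma (y + 1) := by
    rw [← Gamma_nat_eq_factorial]
    have : (2 : ℝ) ≤ n + 1 := by norm_cast; omega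
    exact Gamma_strictMonoOn_Ici.monotoneOn this (by simp only [Set.mem_Ici]; linarith)
      (by linarith)
  have hpow : b ^ y ≤ b * b ^ n := by
    rw [← pow_succ', ← rpow_natCast]
    exact rpow_le_rpow_of_exponent_le hb (by push_cast; linarith [Nat.lt_floor_add_one y])
  calc b ^ y / Gamma (y + 1) ≤ b * b ^ n / n.factorial := by gcongr
    _ = b * (b ^ n / n.factorial) := by ring
    _ ≤ b * exp b := by gcongr; exact pow_div_factorial_le_exp b (by linarith) n

lemma summable_pow_div_Gamma_mul_add_two {δ r : ℝ} (hδ : 0 < δ) (hr : 0 ≤ r) :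
    Summable fun k : ℕ => r ^ k / Gamma (δ * k + 2) := by
  -- with `r ≤ b ^ δ`, use `rpow_div_Gamma_add_one_le` at base `2 * b`: the leftover `2 ^ (-δ k)`
  -- is the geometric factor
  set b := max (r ^ δ⁻¹) 1
  have hb : 1 ≤ b := le_max_right _ _
  have hrb : r ≤ b ^ δ := by
    calc r = (r ^ δ⁻¹) ^ δ := by rw [← rpow_mul hr, inv_mul_cancel₀ hδ.ne', rpow_one]
      _ ≤ b ^ δ := by gcongr; exact le_max_left _ _
  have hb0 : 0 < b := by linarith
  have hq : (2 ^ δ : ℝ)⁻¹ < 1 := inv_lt_one_of_one_lt₀ (one_lt_rpow (by norm_num) hδ)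
  refine Summable.of_nonneg_of_le (fun k => by positivity) (fun k => ?_)
    ((summable_geometric_of_lt_one (by positivity) hq).mul_left (b * exp (2 * b)))
  have hy : (1 : ℝ) ≤ δ * k + 1 := le_add_of_nonneg_left (by positivity)
  calc r ^ k / Gamma (δ * k + 2) ≤ b ^ (δ * k + 1) / Gamma (δ * k + 1 + 1) := by
        rw [add_assoc, one_add_one_eq_two, rpow_add hb0, rpow_one, rpow_mul_natCast hb0.le]
        gcongr
        calc r ^ k ≤ (b ^ δ) ^ k := by gcongr
            _ ≤ (b ^ δ) ^ k * b := le_mul_of_one_le_right (by positivity) hb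
    _ = (2 * b) ^ (δ * k + 1) / Gamma (δ * k + 1 + 1) * (2 ^ δ)⁻¹ ^ k * 2⁻¹ := by
        rw [mul_rpow zero_le_two hb0.le, rpow_add two_pos, rpow_one, rpow_mul_natCast zero_le_two,
          inv_pow]
        field_simp
    _ ≤ (2 * b) * exp (2 * b) * (2 ^ δ)⁻¹ ^ k * 2⁻¹ := by
        gcongr; exact rpow_div_Gamma_add_one_le (by linarith) hy
    _ = b * exp (2 * b) * (2 ^ δ)⁻¹ ^ k := by ring

lemma summable_norm_pow_div_Gamma {δ : ℝ} (hδ : 0 < δ) (θ z : ℝ) :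
    Summable fun k : ℕ => ‖z ^ k / Gamma (δ * k + θ)‖ := by
  -- past an index `K` with `δ * K + θ ≥ 2`, monotonicity of `Γ` compares with the case `θ = 2`
  obtain ⟨K, hK⟩ := exists_nat_ge ((2 - θ) / δ)
  rw [div_le_iff₀ hδ] at hK
  rw [← summable_nat_add_iff K]
  refine Summable.of_nonneg_of_le (fun k => norm_nonneg _) (fun k => ?_)
    ((summable_pow_div_Gamma_mul_add_two hδ (abs_nonneg z)).mul_left (|z| ^ K))
  have h2 : (2 : ℝ) ≤ δ * k + 2 := le_add_of_nonneg_left (by positivity)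
  have hle : δ * k + 2 ≤ δ * ↑(k + K) + θ := by push_cast; linarith
  have hΓ : Gamma (δ * k + 2) ≤ Gamma (δ * ↑(k + K) + θ) :=
    Gamma_strictMonoOn_Ici.monotoneOn h2 (h2.trans hle) hle
  have hΓpos : 0 < Gamma (δ * k + 2) := Gamma_pos_of_pos (by linarith)
  rw [norm_div, norm_pow, norm_eq_abs, norm_of_nonneg (hΓpos.le.trans hΓ), pow_add]
  calc |z| ^ k * |z| ^ K / Gamma (δ * ↑(k + K) + θ) ≤ |z| ^ k * |z| ^ K / Gamma (δ * k + 2) := by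
        gcongr
    _ = |z| ^ K * (|z| ^ k / Gamma (δ * k + 2)) := by ring

lemma continuous_mittagLeffler {δ : ℝ} (hδ : 0 < δ) (θ : ℝ) : Continuous (mittagLeffler δ θ) := by
  refine continuous_iff_continuousAt.2 fun x => ?_
  set R := |x| + 1
  have hR : ContinuousOn (mittagLeffler δ θ) (Set.Icc (-R) R) := by
    refine continuousOn_tsum (fun k => by fun_prop) (summable_norm_pow_div_Gamma hδ θ R)
      (fun k z hz => ?_)
    rw [norm_div, norm_div, norm_pow, norm_pow]
    gcongr
    rw [norm_eq_abs, norm_eq_abs]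
    exact (abs_le.2 hz).trans (le_abs_self R)
  exact hR.continuousAt (Icc_mem_nhds (by linarith [neg_abs_le x]) (by linarith [le_abs_self x]))

lemma integral_rpow_mul_sub_rpow {a b t : ℝ} (ha : 0 < a) (hb : 0 < b) (ht : 0 < t) :
    ∫ s in (0 : ℝ)..t, s ^ (a - 1) * (t - s) ^ (b - 1)
      = t ^ (a + b - 1) * (Gamma a * Gamma b / Gamma (a + b)) := by
  have hC : ((∫ s in (0 : ℝ)..t, s ^ (a - 1) * (t - s) ^ (b - 1) : ℝ) : ℂ)
      = ∫ s in (0 : ℝ)..t, (s : ℂ) ^ ((a : ℂ) - 1) * ((t : ℂ) - s) ^ ((b : ℂ) - 1) := by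
    rw [← intervalIntegral.integral_ofReal]
    refine intervalIntegral.integral_congr fun s hs => ?_
    rw [Set.uIcc_of_le ht.le] at hs
    rw [Complex.ofReal_mul, Complex.ofReal_cpow hs.1, Complex.ofReal_cpow (by linarith [hs.2])]
    push_cast
    ring
  have hβ : Complex.betaIntegral a b
      = Complex.Gamma a * Complex.Gamma b / Complex.Gamma (a + b) := by
    rw [eq_div_iff (Complex.Gamma_ne_zero_of_re_pos (by simp; positivity)), mul_comm]
    exact (Complex.Gamma_mul_Gamma_eq_betaIntegral (by simpa using ha) (by simpa using hb)).symm
  apply Complex.ofReal_injective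
  rw [hC, Complex.betaIntegral_scaled _ _ ht, hβ, Complex.ofReal_mul, Complex.ofReal_cpow ht.le]
  push_cast [← Complex.Gamma_ofReal]
  rfl

lemma integral_rpow_div_Gamma_mul_sub_rpow {a β t : ℝ} (ha : -1 < a) (hβ : 0 < β) (ht : 0 < t) :
    ∫ s in (0 : ℝ)..t, s ^ a / Gamma (a + 1) * (t - s) ^ (β - 1)
      = Gamma β * (t ^ (a + β) / Gamma (a + β + 1)) := by
  have ha' : 0 < a + 1 := by linarith
  have h := integral_rpow_mul_sub_rpow ha' hβ ht
  simp only [show a + 1 + β = a + β + 1 by ring, add_sub_cancel_right] at h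
  simp only [div_mul_eq_mul_div, intervalIntegral.integral_div, h]
  field_simp [(Gamma_pos_of_pos ha').ne']

lemma intervalIntegral_tsum_of_summable_integral_norm {ι E : Type*} [Countable ι]
    [NormedAddCommGroup E] [NormedSpace ℝ E] {F : ι → ℝ → E} {a b : ℝ} (hab : a ≤ b)
    (hF_int : ∀ i, IntervalIntegrable (F i) volume a b)
    (hF_sum : Summable fun i => ∫ x in a..b, ‖F i x‖) :
    ∫ x in a..b, ∑' i, F i x = ∑' i, ∫ x in a..b, F i x := by
  simp only [intervalIntegral.integral_of_le hab] at hF_sum ⊢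
  exact (integral_tsum_of_summable_integral_norm (fun i => (hF_int i).1) hF_sum).symm

lemma rpow_mul_natCast_add {x : ℝ} (hx : 0 < x) (δ a : ℝ) (k : ℕ) :
    x ^ (δ * k + a) = (x ^ δ) ^ k * x ^ a := by
  rw [rpow_add hx, rpow_mul_natCast hx.le]

theorem RLintegralLeft0_rpow_mul_mittagLeffler {δ γ β t : ℝ} (hδ : 0 < δ) (hγ : -1 < γ)
    (hβ : 0 < β) (μ : ℝ) (ht : 0 < t) :
    RLintegralLeft0 β (fun s => s ^ γ * mittagLeffler δ (γ + 1) (μ * s ^ δ)) t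
      = t ^ (γ + β) * mittagLeffler δ (γ + β + 1) (μ * t ^ δ) := by
  set P : ℕ → ℝ → ℝ := fun k s => s ^ (δ * k + γ) / Gamma (δ * k + γ + 1) * (t - s) ^ (β - 1)
  have hk : ∀ k : ℕ, -1 < δ * k + γ := fun k => by
    linarith [mul_nonneg hδ.le (Nat.cast_nonneg (α := ℝ) k)]
  have hP : ∀ k, ∫ s in (0 : ℝ)..t, P k s
      = Gamma β * (t ^ (δ * k + γ + β) / Gamma (δ * k + γ + β + 1)) := fun k =>
    integral_rpow_div_Gamma_mul_sub_rpow (hk k) hβ ht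
  have hP_pos : ∀ k, 0 < ∫ s in (0 : ℝ)..t, P k s := fun k => by
    rw [hP]
    have := Gamma_pos_of_pos (show 0 < δ * k + γ + β + 1 by linarith [hk k])
    exact mul_pos (Gamma_pos_of_pos hβ) (by positivity)
  have hP_nonneg : ∀ k, ∀ s ∈ Set.uIcc 0 t, 0 ≤ P k s := fun k s hs => by
    obtain ⟨hs0, hst⟩ := Set.uIcc_of_le ht.le ▸ hs
    have := Gamma_pos_of_pos (show 0 < δ * k + γ + 1 by linarith [hk k])
    have := sub_nonneg.2 hst
    positivity
  have hexpand : ∀ s ∈ Set.Ioc 0 t,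
      s ^ γ * mittagLeffler δ (γ + 1) (μ * s ^ δ) * (t - s) ^ (β - 1) = ∑' k : ℕ, μ ^ k * P k s := fun s hs => by
    simp only [P, mittagLeffler, ← tsum_mul_left, ← tsum_mul_right]
    refine tsum_congr fun k => ?_
    rw [rpow_mul_natCast_add hs.1, mul_pow, ← add_assoc]
    ring
  have hint : ∀ k, IntervalIntegrable (fun s => μ ^ k * P k s) volume 0 t := fun k =>
    (intervalIntegrable_of_integral_ne_zero (hP_pos k).ne').const_mul _
  have hnorm : ∀ k, ∫ s in (0 : ℝ)..t, ‖μ ^ k * P k s‖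
      = Gamma β * t ^ (γ + β) * ‖(|μ| * t ^ δ) ^ k / Gamma (δ * k + (γ + β + 1))‖ := fun k => by
    rw [intervalIntegral.integral_congr (g := fun s => |μ| ^ k * P k s) fun s hs => by
      simp only [norm_mul, norm_pow, norm_eq_abs, abs_of_nonneg (hP_nonneg k s hs)]]
    have hΓ := Gamma_pos_of_pos (show 0 < δ * k + (γ + β + 1) by linarith [hk k])
    rw [intervalIntegral.integral_const_mul, hP, norm_div, norm_of_nonneg hΓ.le, norm_pow,
      norm_of_nonneg (by positivity)]
    simp only [← add_assoc, rpow_add ht, rpow_mul_natCast ht.le, mul_pow]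
    ring
  have hsum : Summable fun k => ∫ s in (0 : ℝ)..t, ‖μ ^ k * P k s‖ := by
    simp only [hnorm]
    exact (summable_norm_pow_div_Gamma hδ _ _).mul_left _
  unfold RLintegralLeft0
  rw [intervalIntegral.integral_congr_ae (Filter.Eventually.of_forall fun s hs => hexpand s
      (by rwa [Set.uIoc_of_le ht.le] at hs)),
    intervalIntegral_tsum_of_summable_integral_norm ht.le hint hsum]
  simp only [intervalIntegral.integral_const_mul, hP, mittagLeffler, ← tsum_mul_left]
  refine tsum_congr fun k => ?_
  simp only [← add_assoc, rpow_add ht, rpow_mul_natCast ht.le, mul_pow]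
  field_simp

lemma RLintegralLeft0_const_mul (β c : ℝ) (f : ℝ → ℝ) (t : ℝ) :
    RLintegralLeft0 β (fun s => c * f s) t = c * RLintegralLeft0 β f t := by
  simp only [RLintegralLeft0, mul_assoc, intervalIntegral.integral_const_mul]
  ring

theorem stmt13 (α lam c : ℝ) (hα : 0 < α ∧ α < 1) (hc : c ≠ 0)
    (y : ℝ → ℝ)
    (hy : ∀ t, y t = c * (t ^ α * mittagLeffler (2 * α) (α + 1) (-lam * t ^ (2 * α)))) :
    (RLintegralLeft0 (1 - α) y 1 = 0 ↔ mittagLeffler (2 * α) 2 (-lam) = 0) ∧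
      Filter.Tendsto (RLintegralLeft0 (1 - α) y)
        (nhdsWithin 0 (Set.Ioi 0)) (nhds 0) := by
  obtain ⟨hα0, hα1⟩ := hα
  have hI : ∀ t, 0 < t →
      RLintegralLeft0 (1 - α) y t = c * (t * mittagLeffler (2 * α) 2 (-lam * t ^ (2 * α))) := by
    intro t ht
    have h := RLintegralLeft0_rpow_mul_mittagLeffler (by positivity : 0 < 2 * α)
      (by linarith : -1 < α) (by linarith : 0 < 1 - α) (-lam) ht
    rw [add_sub_cancel, rpow_one, one_add_one_eq_two] at h
    rw [funext hy, RLintegralLeft0_const_mul, h]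
  refine ⟨?_, ?_⟩
  · rw [hI 1 one_pos, one_rpow, mul_one, one_mul, mul_eq_zero, or_iff_right hc]
  · have hcont : Continuous fun t => c * (t * mittagLeffler (2 * α) 2 (-lam * t ^ (2 * α))) :=
      continuous_const.mul (continuous_id.mul ((continuous_mittagLeffler (by positivity) 2).comp
        (continuous_const.mul (continuous_rpow_const (by positivity)))))
    have hlim := (hcont.tendsto 0).mono_left (nhdsWithin_le_nhds (s := Set.Ioi 0))
    rw [zero_mul, mul_zero] at hlim
    exact hlim.congr' (eventually_nhdsWithin_of_forall fun t ht => (hI t ht).symm)
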